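/- arXiv:1304.7699 — 6 statements merged into one kernel-verified Lean document; each statement's English description precedes it below -/
import Mathlib

section
/- Let k, m ≥ 1, let 𝔤 be a finite-dimensional real Lie algebra with dual 𝔤*, and fix α₀ ∈ 𝔤*. Consider the real vector space W = (Fin k → ℝᵐ) × ℝᵐ × (Fin k → ℝᵐ) × (Fin k → 𝔤) × 𝔤 × (Fin k → 𝔤*), whose elements are written X = (F, F_k, G, ξ, ξ^k, ν), and the alternating bilinear form Ω(X₁,X₂) = Σ_{i=0}^{k−1} ( ⟨F₁(i),G₂(i)⟩ − ⟨F₂(i),G₁(i)⟩ + ν₂(i)(ξ₁(i)) − ν₁(i)(ξ₂(i)) ) + α₀([ξ₁(0), ξ₂(0)]), where ⟨·,·⟩ is the standard inner product on ℝᵐ and [·,·] is the Lie bracket of 𝔤. Then X = (F, F_k, G, ξ, ξ^k, ν) lies in the radical of Ω (i.e. Ω(X,Y) = 0 for all Y ∈ W) if and only if F(i) = 0, G(i) = 0, ξ(i) = 0 and ν(i) = 0 for all i ∈ Fin k; in other words, the radical is exactly the subspace where only the components F_k and ξ^k are free. (This is the linear content of the local description ker Ω = ⟨∂/∂q_kᴬ,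 ∂/∂ξ^{k−1}⟩ of the kernel of the presymplectic form on the higher-order Pontryagin bundle W = T^k(M×G) ×_{T^{k−1}(M×G)} T*(T^{k−1}(M×G)).) -/
open Finset in
/-- The radical of the presymplectic form on the higher-order Pontryagin bundle
`T^k(M×G) ×_{T^{k−1}(M×G)} T*(T^{k−1}(M×G))` (in natural coordinates, with
`α₀ ∈ 𝔤*` fixed) consists exactly of the vectors whose only nonzero components are
`F_k` and `ξ^k`: the linear content of `ker Ω = ⟨∂/∂q_kᴬ, ∂/∂ξ^{k−1}⟩`. -/
theorem higher_order_pontryagin_kernel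
    (k m : ℕ) (hk : 1 ≤ k) (hm : 1 ≤ m)
    (g : Type*) [LieRing g] [LieAlgebra ℝ g] [FiniteDimensional ℝ g]
    (α₀ : Module.Dual ℝ g)
    (F : Fin k → Fin m → ℝ) (Fk : Fin m → ℝ) (G : Fin k → Fin m → ℝ)
    (ξ : Fin k → g) (ξk : g) (ν : Fin k → Module.Dual ℝ g) :
    (∀ (F₂ : Fin k → Fin m → ℝ) (Fk₂ : Fin m → ℝ) (G₂ : Fin k → Fin m → ℝ)
        (ξ₂ : Fin k → g) (ξk₂ : g) (ν₂ : Fin k → Module.Dual ℝ g),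
        (∑ i : Fin k, ((∑ j : Fin m, F i j * G₂ i j)
            - (∑ j : Fin m, F₂ i j * G i j)
            + ν₂ i (ξ i) - ν i (ξ₂ i)))
          + α₀ ⁅ξ ⟨0, hk⟩, ξ₂ ⟨0, hk⟩⁆ = 0) ↔
      (F = 0 ∧ G = 0 ∧ ξ = 0 ∧ ν = 0) := by

  constructor
  · intro h
    have hξ : ξ = 0 := by
      funext i
      show ξ i = 0
      rw [← Module.forall_dual_apply_eq_zero_iff ℝ (ξ i)]
      intro φ
      have := h 0 0 0 0 0 (Pi.single i φ)
      simpa [Pi.single_apply, apply_ite, ite_apply, Finset.sum_ite_eq'] using this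
    have hν : ν = 0 := by
      funext i
      apply LinearMap.ext; intro v
      have := h 0 0 0 (Pi.single i v) 0 0
      simpa [hξ, Pi.single_apply, apply_ite, Finset.sum_ite_eq'] using this
    have hF : F = 0 := by
      funext i j
      have := h 0 0 (Pi.single i (Pi.single j 1)) 0 0 0
      simpa [Pi.single_apply, apply_ite, ite_apply, Finset.sum_ite_eq', mul_ite] using this
    have hG : G = 0 := by
      funext i j
      have := h (Pi.single i (Pi.single j 1)) 0 0 0 0 0
      simpa [Pi.single_apply, apply_ite, ite_apply, Finset.sum_ite_eq', ite_mul, sub_eq_zero] using this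
    exact ⟨hF, hG, hξ, hν⟩
  · rintro ⟨hF, hG, hξ, hν⟩ F₂ Fk₂ G₂ ξ₂ ξk₂ ν₂
    simp [hF, hG, hξ, hν]
end

section
/- Let k, m ≥ 1, and let f₀, f₁, …, f_k : ℝ → ℝᵐ be smooth (C^∞) functions. Suppose p⁰, p¹, …, p^{k−1} : ℝ → ℝᵐ are differentiable functions satisfying: (i) (p⁰)'(t) = f₀(t) for all t; (ii) (pⁱ)'(t) = fᵢ(t) − p^{i−1}(t) for all t and all 1 ≤ i ≤ k−1; and (iii) p^{k−1}(t) = f_k(t) for all t. Then Σ_{i=0}^{k} (−1)ⁱ (dⁱ/dtⁱ fᵢ)(t) = 0 for all t ∈ ℝ, where dⁱ/dtⁱ denotes the i-th iterated derivative. (This is the derivation of the kth-order Euler–Lagrange equations Σ_{i=0}^{k}(−1)ⁱ (dⁱ/dtⁱ)(∂L/∂qᵢᴬ) = 0 from the momentum recursion ṗ_A⁰ = ∂L/∂q₀ᴬ, ṗ_Aⁱ = ∂L/∂qᵢᴬ − p_A^{i−1}, together with the compatibility constraint p_A^{k−1} = ∂L/∂q_kᴬ arising from the constraint algorithm on the Pontryagin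 bundle.) -/
lemma iteratedDeriv_sub' {F : Type*} [NormedAddCommGroup F] [NormedSpace ℝ F]
    {n : ℕ} {f g : ℝ → F} (hf : ContDiff ℝ n f) (hg : ContDiff ℝ n g) :
    iteratedDeriv n (f - g) = iteratedDeriv n f - iteratedDeriv n g := by
  funext x
  simp_rw [← iteratedDerivWithin_univ]
  rw [iteratedDerivWithin_sub (Set.mem_univ x) uniqueDiffOn_univ
    hf.contDiffWithinAt hg.contDiffWithinAt]
  rfl

open Finset in
/-- Derivation of the kth-order Euler–Lagrange equations
`Σ_{i=0}^{k} (−1)ⁱ (dⁱ/dtⁱ)(∂L/∂qᵢᴬ) = 0` from the momentum recursion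
`ṗ⁰ = f₀`, `ṗⁱ = fᵢ − p^{i−1}` and the compatibility constraint `p^{k−1} = f_k`
arising from the constraint algorithm on the Pontryagin bundle. -/
theorem higher_order_euler_lagrange
    (k m : ℕ) (hk : 1 ≤ k) (hm : 1 ≤ m)
    (f : ℕ → ℝ → (Fin m → ℝ)) (hf : ∀ i ≤ k, ContDiff ℝ (⊤ : ℕ∞) (f i))
    (p : ℕ → ℝ → (Fin m → ℝ)) (hp : ∀ i ≤ k - 1, Differentiable ℝ (p i))
    (h0 : ∀ t : ℝ, deriv (p 0) t = f 0 t)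
    (hi : ∀ i, 1 ≤ i → i ≤ k - 1 → ∀ t : ℝ, deriv (p i) t = f i t - p (i - 1) t)
    (hc : ∀ t : ℝ, p (k - 1) t = f k t) :
    ∀ t : ℝ, ∑ i ∈ Finset.range (k + 1), ((-1 : ℝ) ^ i) • iteratedDeriv i (f i) t = 0 := by
  -- smoothness of the momenta
  have hsmooth : ∀ i, i ≤ k - 1 → ContDiff ℝ (⊤ : ℕ∞) (p i) := by
    intro i
    induction i with
    | zero =>
      intro _
      rw [contDiff_infty_iff_deriv]
      refine ⟨hp 0 (Nat.zero_le _), ?_⟩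
      have : deriv (p 0) = f 0 := funext h0
      rw [this]; exact (hf 0 (Nat.zero_le _)).of_le (by simp)
    | succ n ih =>
      intro hn
      rw [contDiff_infty_iff_deriv]
      refine ⟨hp _ hn, ?_⟩
      have hd : deriv (p (n + 1)) = f (n + 1) - p n := by
        funext t
        simpa using hi (n + 1) (by omega) hn t
      rw [hd]
      exact ((hf _ (by omega)).of_le (by simp)).sub (ih (by omega))
  -- key identity
  have key : ∀ i, i ≤ k - 1 → ∀ t : ℝ,
      iteratedDeriv (i + 1) (p i) t
        = ∑ j ∈ Finset.range (i + 1), ((-1 : ℝ) ^ (i - j)) • iteratedDeriv j (f j) t := by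
    intro i
    induction i with
    | zero =>
      intro _ t
      simp [iteratedDeriv_succ', iteratedDeriv_zero, h0 t]
    | succ n ih =>
      intro hn t
      have hd : deriv (p (n + 1)) = f (n + 1) - p n := by
        funext t
        simpa using hi (n + 1) (by omega) hn t
      have hstep : iteratedDeriv (n + 2) (p (n + 1)) t
          = iteratedDeriv (n + 1) (f (n + 1)) t - iteratedDeriv (n + 1) (p n) t := by
        rw [iteratedDeriv_succ', hd,
          iteratedDeriv_sub' ((hf _ (by omega)).of_le (by exact_mod_cast le_top))
            ((hsmooth n (by omega)).of_le (by exact_mod_cast le_top))]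
        rfl
      have hsum : ∑ j ∈ Finset.range (n + 1), ((-1 : ℝ) ^ (n + 1 - j)) • iteratedDeriv j (f j) t
          = -∑ j ∈ Finset.range (n + 1), ((-1 : ℝ) ^ (n - j)) • iteratedDeriv j (f j) t := by
        rw [← Finset.sum_neg_distrib]
        refine Finset.sum_congr rfl fun j hj => ?_
        have hj' : j ≤ n := Nat.lt_succ_iff.mp (Finset.mem_range.mp hj)
        have : n + 1 - j = (n - j) + 1 := by omega
        rw [this, pow_succ, ← neg_smul]
        ring_nf
      rw [hstep, Finset.sum_range_succ, hsum, ih (by omega) t]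
      simp
      abel
  -- use the constraint
  intro t
  have hk1 : k - 1 + 1 = k := by omega
  have hfk : iteratedDeriv k (f k) t
      = ∑ j ∈ Finset.range k, ((-1 : ℝ) ^ (k - 1 - j)) • iteratedDeriv j (f j) t := by
    have hpf : p (k - 1) = f k := funext hc
    have := key (k - 1) le_rfl t
    rw [hpf, hk1] at this
    exact this
  rw [Finset.sum_range_succ, hfk, Finset.smul_sum]
  have : ∀ j ∈ Finset.range k,
      ((-1 : ℝ) ^ k) • ((-1 : ℝ) ^ (k - 1 - j)) • iteratedDeriv j (f j) t
        = -(((-1 : ℝ) ^ j) • iteratedDeriv j (f j) t) := by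
    intro j hj
    have hj' : j < k := Finset.mem_range.mp hj
    have hcoef : ((-1 : ℝ) ^ k) * ((-1 : ℝ) ^ (k - 1 - j)) = -((-1 : ℝ) ^ j) := by
      rw [← pow_add]
      have hodd : Odd (k + (k - 1 - j) + j) := ⟨k - 1, by omega⟩
      have : ((-1 : ℝ)) ^ (k + (k - 1 - j) + j) = -1 := hodd.neg_one_pow
      rw [pow_add] at this
      have hsq : ((-1 : ℝ) ^ j) * ((-1 : ℝ) ^ j) = 1 := by
        rw [← pow_add]; exact Even.neg_one_pow ⟨j, rfl⟩
      have h3 : ((-1 : ℝ)) ^ (k + (k - 1 - j)) * (((-1 : ℝ)) ^ j * ((-1 : ℝ)) ^ j)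
          = -((-1 : ℝ)) ^ j := by rw [← mul_assoc, this]; ring
      rw [hsq, mul_one] at h3
      exact h3
    rw [smul_smul, hcoef, neg_smul]
  rw [Finset.sum_congr rfl this, Finset.sum_neg_distrib]
  simp
end

section
/- Let k ≥ 1, let 𝔤 be a finite-dimensional real Lie algebra with dual 𝔤*, and for ξ ∈ 𝔤 define ad*_ξ : 𝔤* → 𝔤* by (ad*_ξ μ)(η) = μ([ξ,η]) for all η ∈ 𝔤. Let ξ : ℝ → 𝔤, h : ℝ → 𝔤*, and f₀, …, f_{k−1} : ℝ → 𝔤* be smooth (C^∞) functions, and suppose α₀, …, α_{k−1} : ℝ → 𝔤* are differentiable functions satisfying: (i) α₀'(t) = h(t) + ad*_{ξ(t)} α₀(t) for all t; (ii) α_{i+1}'(t) = fᵢ(t) − αᵢ(t) for all t and all 0 ≤ i ≤ k−2; and (iii) α_{k−1}(t) = f_{k−1}(t) for all t. Then, setting μ(t) = Σ_{i=0}^{k−1} (−1)ⁱ (dⁱ/dtⁱ fᵢ)(t), one has μ'(t) − ad*_{ξ(t)} μ(t) = h(t) for all t ∈ ℝ. (This is the derivation of the kth-order trivialized Euler–Lagrange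 equations (d/dt − ad*_{ξ⁰}) Σ_{i=0}^{k−1}(−1)ⁱ(dⁱ/dtⁱ)(∂L/∂ξⁱ) = £*_g(∂L/∂g) from the momentum recursion α̇₀ = £*_g(∂L/∂g) + ad*_{ξ⁰}α₀, α̇_{i+1} = ∂L/∂ξⁱ − αᵢ, together with the compatibility constraint α_{k−1} = ∂L/∂ξ^{k−1}.) -/
set_option maxRecDepth 4000 in
open Finset in
/-- Derivation of the kth-order trivialized Euler–Lagrange equations
`(d/dt − ad*_{ξ⁰}) Σ_{i=0}^{k−1}(−1)ⁱ(dⁱ/dtⁱ)(∂L/∂ξⁱ) = £*_g(∂L/∂g)` from the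
momentum recursion `α̇₀ = h + ad*_ξ α₀`, `α̇_{i+1} = fᵢ − αᵢ` and the compatibility
constraint `α_{k−1} = f_{k−1}`. -/
theorem trivialized_euler_lagrange
    (k : ℕ) (hk : 1 ≤ k)
    (g : Type*) [NormedAddCommGroup g] [NormedSpace ℝ g]
    [LieRing g] [LieAlgebra ℝ g] [FiniteDimensional ℝ g]
    (adStar : g → (@ContinuousLinearMap ℝ ℝ _ _ (RingHom.id ℝ) g _ (AddCommGroup.toAddCommMonoid (self := NormedAddCommGroup.toAddCommGroup)) ℝ _ _ NormedSpace.toModule _) → (@ContinuousLinearMap ℝ ℝ _ _ (RingHom.id ℝ) g _ (AddCommGroup.toAddCommMonoid (self := NormedAddCommGroup.toAddCommGroup)) ℝ _ _ NormedSpace.toModule _))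
    (hadStar : ∀ (ζ : g) (μ : (@ContinuousLinearMap ℝ ℝ _ _ (RingHom.id ℝ) g _ (AddCommGroup.toAddCommMonoid (self := NormedAddCommGroup.toAddCommGroup)) ℝ _ _ NormedSpace.toModule _)) (η : g), adStar ζ μ η = μ ⁅ζ, η⁆)
    (ξ : ℝ → g) (hξ : ContDiff ℝ (⊤ : ℕ∞) ξ)
    (h : ℝ → (@ContinuousLinearMap ℝ ℝ _ _ (RingHom.id ℝ) g _ (AddCommGroup.toAddCommMonoid (self := NormedAddCommGroup.toAddCommGroup)) ℝ _ _ NormedSpace.toModule _)) (hh : ContDiff ℝ (⊤ : ℕ∞) h)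
    (f : ℕ → ℝ → (@ContinuousLinearMap ℝ ℝ _ _ (RingHom.id ℝ) g _ (AddCommGroup.toAddCommMonoid (self := NormedAddCommGroup.toAddCommGroup)) ℝ _ _ NormedSpace.toModule _)) (hf : ∀ i ≤ k - 1, ContDiff ℝ (⊤ : ℕ∞) (f i))
    (α : ℕ → ℝ → (@ContinuousLinearMap ℝ ℝ _ _ (RingHom.id ℝ) g _ (AddCommGroup.toAddCommMonoid (self := NormedAddCommGroup.toAddCommGroup)) ℝ _ _ NormedSpace.toModule _)) (hα : ∀ i ≤ k - 1, Differentiable ℝ (α i))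
    (h0 : ∀ t : ℝ, deriv (α 0) t = h t + adStar (ξ t) (α 0 t))
    (hi : ∀ i, i + 2 ≤ k → ∀ t : ℝ, deriv (α (i + 1)) t = f i t - α i t)
    (hc : ∀ t : ℝ, α (k - 1) t = f (k - 1) t) :
    ∀ t : ℝ,
      deriv (fun s => ∑ i ∈ Finset.range k, ((-1 : ℝ) ^ i) • iteratedDeriv i (f i) s) t
        - adStar (ξ t)
            (∑ i ∈ Finset.range k, ((-1 : ℝ) ^ i) • iteratedDeriv i (f i) t)
        = h t := by
  -- key claim: for j + d + 1 = k, α j t = ∑_{i < d+1} (-1)^i • iteratedDeriv i (f (j+i)) t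
  have key : ∀ d j, j + d + 1 = k → ∀ t : ℝ,
      α j t = ∑ i ∈ Finset.range (d + 1),
        ((-1 : ℝ) ^ i) • iteratedDeriv i (f (j + i)) t := by
    intro d
    induction d with
    | zero =>
      intro j hj t
      have : j = k - 1 := by omega
      subst this
      simpa using hc t
    | succ d ih =>
      intro j hj t
      have hj1 : (j + 1) + d + 1 = k := by omega
      have ihj := ih (j + 1) hj1
      have hfl : ∀ i ∈ Finset.range (d + 1), ContDiff ℝ (⊤ : ℕ∞) (f (j + 1 + i)) := by
        intro i hi'
        apply hf
        have := Finset.mem_range.mp hi'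
        omega
      have hdiff : ∀ i ∈ Finset.range (d + 1),
          Differentiable ℝ (iteratedDeriv i (f (j + 1 + i))) := fun i hi' =>
        (hfl i hi').differentiable_iteratedDeriv i
          (by exact_mod_cast lt_top_iff_ne_top.2 (by simp))
      have hdsum : deriv (α (j + 1)) t
          = ∑ i ∈ Finset.range (d + 1),
              ((-1 : ℝ) ^ i) • iteratedDeriv (i + 1) (f (j + 1 + i)) t := by
        have hfun : α (j + 1) = fun s => ∑ i ∈ Finset.range (d + 1),
            ((-1 : ℝ) ^ i) • iteratedDeriv i (f (j + 1 + i)) s := funext ihj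
        rw [hfun, deriv_fun_sum]
        · refine Finset.sum_congr rfl fun i hi' => ?_
          rw [deriv_fun_const_smul _ ((hdiff i hi').differentiableAt), ← iteratedDeriv_succ]
        · exact fun i hi' => ((hdiff i hi').differentiableAt).fun_const_smul _
      have halg : α j t = f j t - deriv (α (j + 1)) t := by
        have := hi j (by omega) t
        rw [this]; abel
      rw [halg, hdsum]
      conv_rhs => rw [Finset.sum_range_succ']
      have hcong : ∀ i ∈ Finset.range (d + 1),
          ((-1 : ℝ) ^ (i + 1)) • iteratedDeriv (i + 1) (f (j + (i + 1))) t
            = -(((-1 : ℝ) ^ i) • iteratedDeriv (i + 1) (f (j + 1 + i)) t) := by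
        intro i _
        rw [show j + (i + 1) = j + 1 + i from by omega, pow_succ, mul_smul]
        exact (congrArg (fun x => ((-1 : ℝ) ^ i) • x) (neg_one_smul ℝ (iteratedDeriv (i + 1) (f (j + 1 + i)) t))).trans (smul_neg _ _)
      rw [Finset.sum_congr rfl hcong, Finset.sum_neg_distrib]
      simp only [pow_zero, one_smul, Nat.add_zero, iteratedDeriv_zero]
      abel
  intro t
  have h0sum : (fun s => ∑ i ∈ Finset.range k, ((-1 : ℝ) ^ i) • iteratedDeriv i (f i) s)
      = α 0 := by
    funext s
    have := key (k - 1) 0 (by omega) s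
    simpa [Nat.sub_add_cancel hk] using this.symm
  rw [h0sum, h0 t, ← congrFun h0sum t]
  abel
end

section
/- Let k ≥ 1, let 𝔤 be a finite-dimensional real Lie algebra with dual 𝔤*, and for ξ ∈ 𝔤 define ad*_ξ : 𝔤* → 𝔤* by (ad*_ξ μ)(η) = μ([ξ,η]) for all η ∈ 𝔤. Let ξ : ℝ → 𝔤 and f₀, …, f_{k−1} : ℝ → 𝔤* be smooth (C^∞) functions, and suppose α₀, …, α_{k−1} : ℝ → 𝔤* are differentiable functions satisfying: (i) α₀'(t) = ad*_{ξ(t)} α₀(t) for all t; (ii) α_{i+1}'(t) = fᵢ(t) − αᵢ(t) for all t and all 0 ≤ i ≤ k−2; and (iii) α_{k−1}(t) = f_{k−1}(t) for all t. Then, setting μ(t) = Σ_{i=0}^{k−1} (−1)ⁱ (dⁱ/dtⁱ fᵢ)(t), one has μ'(t) = ad*_{ξ(t)} μ(t) for all t ∈ ℝ. (This is the derivation of the kth-order Euler–Poincaré equations (d/dt − ad*_{ξ⁰}) Σ_{i=0}^{k−1}(−1)ⁱ(dⁱ/dtⁱ)(∂ℓ/∂ξⁱ) = 0 for a left-invariant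 Lagrangian with reduced Lagrangian ℓ.) -/
open Finset in
/-- Derivation of the kth-order Euler–Poincaré equations
`(d/dt − ad*_{ξ⁰}) Σ_{i=0}^{k−1}(−1)ⁱ(dⁱ/dtⁱ)(∂ℓ/∂ξⁱ) = 0` for a left-invariant
Lagrangian with reduced Lagrangian `ℓ`. -/
theorem higher_order_euler_poincare
    (k : ℕ) (hk : 1 ≤ k)
    (g : Type*) [NormedAddCommGroup g] [NormedSpace ℝ g]
    [LieRing g] [LieAlgebra ℝ g] [@FiniteDimensional ℝ g _ NormedAddCommGroup.toAddCommGroup NormedSpace.toModule]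
    (adStar : g → (@ContinuousLinearMap ℝ ℝ _ _ (RingHom.id ℝ) g _ (@AddCommGroup.toAddCommMonoid g NormedAddCommGroup.toAddCommGroup) ℝ _ _ NormedSpace.toModule _) → (@ContinuousLinearMap ℝ ℝ _ _ (RingHom.id ℝ) g _ (@AddCommGroup.toAddCommMonoid g NormedAddCommGroup.toAddCommGroup) ℝ _ _ NormedSpace.toModule _))
    (hadStar : ∀ (ζ : g) (μ : (@ContinuousLinearMap ℝ ℝ _ _ (RingHom.id ℝ) g _ (@AddCommGroup.toAddCommMonoid g NormedAddCommGroup.toAddCommGroup) ℝ _ _ NormedSpace.toModule _)) (η : g), adStar ζ μ η = μ ⁅ζ, η⁆)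
    (ξ : ℝ → g) (hξ : ContDiff ℝ (⊤ : ℕ∞) ξ)
    (f : ℕ → ℝ → (@ContinuousLinearMap ℝ ℝ _ _ (RingHom.id ℝ) g _ (@AddCommGroup.toAddCommMonoid g NormedAddCommGroup.toAddCommGroup) ℝ _ _ NormedSpace.toModule _)) (hf : ∀ i ≤ k - 1, ContDiff ℝ (⊤ : ℕ∞) (f i))
    (α : ℕ → ℝ → (@ContinuousLinearMap ℝ ℝ _ _ (RingHom.id ℝ) g _ (@AddCommGroup.toAddCommMonoid g NormedAddCommGroup.toAddCommGroup) ℝ _ _ NormedSpace.toModule _)) (hα : ∀ i ≤ k - 1, Differentiable ℝ (α i))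
    (h0 : ∀ t : ℝ, deriv (α 0) t = adStar (ξ t) (α 0 t))
    (hi : ∀ i, i + 2 ≤ k → ∀ t : ℝ, deriv (α (i + 1)) t = f i t - α i t)
    (hc : ∀ t : ℝ, α (k - 1) t = f (k - 1) t) :
    ∀ t : ℝ,
      deriv (fun s => ∑ i ∈ Finset.range k, ((-1 : ℝ) ^ i) • iteratedDeriv i (f i) s) t
        = adStar (ξ t)
            (∑ i ∈ Finset.range k, ((-1 : ℝ) ^ i) • iteratedDeriv i (f i) t) := by
  -- differentiability of iterated derivatives of smooth functions
  have hdiff : ∀ i ≤ k - 1, ∀ j : ℕ, Differentiable ℝ (iteratedDeriv j (f i)) := by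
    intro i hik j
    rw [iteratedDeriv_eq_iterate]
    exact (ContDiff.iterate_deriv j ((hf i hik).of_le (by simp))).differentiable
      (by simp)
  -- key downward induction
  have key : ∀ m : ℕ, ∀ i : ℕ, i + m = k - 1 → ∀ t : ℝ,
      α i t = ∑ j ∈ Finset.range (m + 1),
        ((-1 : ℝ) ^ j) • iteratedDeriv j (f (i + j)) t := by
    intro m
    induction m with
    | zero =>
      intro i him t
      simp only [Nat.add_zero] at him
      subst him
      simp [hc t]
    | succ m ih =>
      intro i him t
      have him' : (i + 1) + m = k - 1 := by omega
      have hik : i + 2 ≤ k := by omega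
      have hαi := (hi i hik t).symm
      -- α i t = f i t - deriv (α (i+1)) t
      have hαeq : α (i + 1) = fun s => ∑ j ∈ Finset.range (m + 1),
          ((-1 : ℝ) ^ j) • iteratedDeriv j (f (i + 1 + j)) s := by
        funext s; exact ih (i + 1) him' s
      have hder : deriv (α (i + 1)) t = ∑ j ∈ Finset.range (m + 1),
          ((-1 : ℝ) ^ j) • iteratedDeriv (j + 1) (f (i + 1 + j)) t := by
        rw [hαeq]
        rw [deriv_fun_sum (fun j hj => by
          have hle : i + 1 + j ≤ k - 1 := by
            have := Finset.mem_range.mp hj; omega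
          exact ((hdiff _ hle j) t).fun_const_smul _)]
        refine Finset.sum_congr rfl fun j hj => ?_
        have hle : i + 1 + j ≤ k - 1 := by
          have := Finset.mem_range.mp hj; omega
        rw [deriv_fun_const_smul _ ((hdiff _ hle j) t), ← iteratedDeriv_succ]
    -- now combine
      have hαit : α i t = f i t - deriv (α (i + 1)) t := by
        rw [hi i hik t]; abel
      rw [hαit, hder]
      conv_rhs => rw [Finset.sum_range_succ']
      simp only [pow_zero, one_smul, iteratedDeriv_zero, Nat.add_zero]
      rw [sub_eq_neg_add, ← Finset.sum_neg_distrib]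
      congr 1
      refine Finset.sum_congr rfl fun j _ => ?_
      have hji : i + (j + 1) = i + 1 + j := by omega
      rw [hji, pow_succ, mul_comm, mul_smul]; exact (neg_one_smul ℝ _).symm
  have hmain : ∀ t : ℝ, α 0 t = ∑ i ∈ Finset.range k,
      ((-1 : ℝ) ^ i) • iteratedDeriv i (f i) t := by
    intro t
    have := key (k - 1) 0 (by omega) t
    have hrw : k - 1 + 1 = k := by omega
    rw [hrw] at this
    simpa using this
  intro t
  have hfun : (fun s => ∑ i ∈ Finset.range k, ((-1 : ℝ) ^ i) • iteratedDeriv i (f i) s)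
      = α 0 := by funext s; exact (hmain s).symm
  rw [hfun, h0 t, hmain t]
end

section
/- Let k, n ≥ 1, let 𝔤 be a finite-dimensional real Lie algebra with dual 𝔤*, and for ξ ∈ 𝔤 define ad*_ξ : 𝔤* → 𝔤* by (ad*_ξ μ)(η) = μ([ξ,η]) for all η ∈ 𝔤. Let ξ : ℝ → 𝔤, h : ℝ → 𝔤*, f₀, …, f_{k−1} : ℝ → 𝔤*, g₀ᵃ, …, g_{k−1}ᵃ : ℝ → 𝔤* (for 1 ≤ a ≤ n) and λ₁, …, λₙ : ℝ → ℝ be smooth (C^∞) functions, and suppose α₀, …, α_{k−1} : ℝ → 𝔤* are differentiable functions satisfying: (i) α₀'(t) = h(t) + ad*_{ξ(t)} α₀(t) for all t; (ii) α_{i+1}'(t) = fᵢ(t) − Σₐ λₐ(t) gᵢᵃ(t) − αᵢ(t) for all t and all 0 ≤ i ≤ k−2; and (iii) α_{k−1}(t) = f_{k−1}(t) − Σₐ λₐ(t) g_{k−1}ᵃ(t) for all t. Then, setting μ(t) = Σ_{i=0}^{k−1} (−1)ⁱ (dⁱ/dtⁱ (fᵢ − Σₐ λₐ gᵢᵃ))(t),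 one has μ'(t) − ad*_{ξ(t)} μ(t) = h(t) for all t ∈ ℝ. (This is the derivation of the kth-order trivialized constrained Euler–Lagrange equations (d/dt − ad*_{ξ⁰}) Σ_{i=0}^{k−1}(−1)ⁱ(dⁱ/dtⁱ)(∂L/∂ξⁱ − λₐ ∂Φᵃ/∂ξⁱ) = £*_g(∂L/∂g − λₐ ∂Φᵃ/∂g).) -/
attribute [local instance 10] LieRing.toAddCommGroup LieAlgebra.toModule

open Finset in
/-- Derivation of the kth-order trivialized constrained Euler–Lagrange equations
`(d/dt − ad*_{ξ⁰}) Σ_{i=0}^{k−1}(−1)ⁱ(dⁱ/dtⁱ)(∂L/∂ξⁱ − λₐ ∂Φᵃ/∂ξⁱ)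
  = £*_g(∂L/∂g − λₐ ∂Φᵃ/∂g)`. -/
theorem trivialized_constrained_euler_lagrange
    (k n : ℕ) (hk : 1 ≤ k) (hn : 1 ≤ n)
    (g : Type*) [NormedAddCommGroup g] [NormedSpace ℝ g]
    [LieRing g] [LieAlgebra ℝ g] [FiniteDimensional ℝ g]
    (adStar : g → (g →L[ℝ] ℝ) → (g →L[ℝ] ℝ))
    (hadStar : ∀ (ζ : g) (μ : g →L[ℝ] ℝ) (η : g), adStar ζ μ η = μ ⁅ζ, η⁆)
    (ξ : ℝ → g) (hξ : ContDiff ℝ (⊤ : ℕ∞) ξ)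
    (h : ℝ → (g →L[ℝ] ℝ)) (hh : ContDiff ℝ (⊤ : ℕ∞) h)
    (f : ℕ → ℝ → (g →L[ℝ] ℝ)) (hf : ∀ i ≤ k - 1, ContDiff ℝ (⊤ : ℕ∞) (f i))
    (gc : Fin n → ℕ → ℝ → (g →L[ℝ] ℝ)) (hgc : ∀ a, ∀ i ≤ k - 1, ContDiff ℝ (⊤ : ℕ∞) (gc a i))
    (lam : Fin n → ℝ → ℝ) (hlam : ∀ a, ContDiff ℝ (⊤ : ℕ∞) (lam a))
    (α : ℕ → ℝ → (g →L[ℝ] ℝ)) (hα : ∀ i ≤ k - 1, Differentiable ℝ (α i))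
    (h0 : ∀ t : ℝ, deriv (α 0) t = h t + adStar (ξ t) (α 0 t))
    (hi : ∀ i, i + 2 ≤ k → ∀ t : ℝ,
        deriv (α (i + 1)) t = f i t - (∑ a, lam a t • gc a i t) - α i t)
    (hc : ∀ t : ℝ, α (k - 1) t = f (k - 1) t - ∑ a, lam a t • gc a (k - 1) t) :
    ∀ t : ℝ,
      deriv (fun s => ∑ i ∈ Finset.range k,
          ((-1 : ℝ) ^ i) •
            iteratedDeriv i (fun u => f i u - ∑ a, lam a u • gc a i u) s) t
        - adStar (ξ t)
            (∑ i ∈ Finset.range k,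
              ((-1 : ℝ) ^ i) •
                iteratedDeriv i (fun u => f i u - ∑ a, lam a u • gc a i u) t)
        = h t := by
  have hF : ∀ i ≤ k - 1,
      ContDiff ℝ (⊤ : ℕ∞) (fun u => f i u - ∑ a, lam a u • gc a i u) := fun i hik =>
    (hf i hik).sub (ContDiff.sum fun a _ => (hlam a).smul (hgc a i hik))
  have hFd : ∀ i ≤ k - 1, ∀ j : ℕ,
      Differentiable ℝ (iteratedDeriv j (fun u => f i u - ∑ a, lam a u • gc a i u)) := by
    intro i hik j
    exact (hF i hik).differentiable_iteratedDeriv j (by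
      exact_mod_cast ENat.coe_lt_top j)
  have key : ∀ d, d ≤ k - 1 → ∀ t : ℝ,
      α (k - 1 - d) t = ∑ j ∈ Finset.range (d + 1), ((-1 : ℝ) ^ j) •
        iteratedDeriv j (fun u => f (k - 1 - d + j) u
          - ∑ a, lam a u • gc a (k - 1 - d + j) u) t := by
    intro d
    induction d with
    | zero =>
      intro _ t
      simpa using hc t
    | succ d ih =>
      intro hd t
      have hd' : d ≤ k - 1 := by omega
      have hi1 : (k - 1 - (d + 1)) + 1 = k - 1 - d := by omega
      have hi2 : (k - 1 - (d + 1)) + 2 ≤ k := by omega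
      set i := k - 1 - (d + 1) with hidef
      have hβ : α (i + 1) = fun s => ∑ j ∈ Finset.range (d + 1),
          ((-1 : ℝ) ^ j) • iteratedDeriv j
            (fun u => f (i + 1 + j) u - ∑ a, lam a u • gc a (i + 1 + j) u) s := by
        funext s
        rw [hi1]
        exact ih hd' s
      have hderiv : deriv (α (i + 1)) t = ∑ j ∈ Finset.range (d + 1),
          ((-1 : ℝ) ^ j) • iteratedDeriv (j + 1)
            (fun u => f (i + 1 + j) u - ∑ a, lam a u • gc a (i + 1 + j) u) t := by
        rw [hβ, deriv_fun_sum]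
        · refine Finset.sum_congr rfl fun j hj => ?_
          simp only [Finset.mem_range] at hj
          rw [deriv_fun_const_smul _ ((hFd (i + 1 + j) (by omega) j).differentiableAt),
            iteratedDeriv_succ]
        · intro j hj
          simp only [Finset.mem_range] at hj
          exact ((hFd (i + 1 + j) (by omega) j).differentiableAt).const_smul ((-1 : ℝ) ^ j)
      have hαi : α i t = (f i t - ∑ a, lam a t • gc a i t) - deriv (α (i + 1)) t := by
        have h2 := hi i hi2 t
        rw [h2]; abel
      rw [hαi, hderiv]
      conv_rhs => rw [Finset.sum_range_succ']
      have hre : ∀ j ∈ Finset.range (d + 1),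
          ((-1 : ℝ) ^ (j + 1)) • iteratedDeriv (j + 1)
            (fun u => f (i + (j + 1)) u - ∑ a, lam a u • gc a (i + (j + 1)) u) t
          = -(((-1 : ℝ) ^ j) • iteratedDeriv (j + 1)
            (fun u => f (i + 1 + j) u - ∑ a, lam a u • gc a (i + 1 + j) u) t) := by
        intro j _
        have e : i + (j + 1) = i + 1 + j := by omega
        rw [e, pow_succ, mul_comm, neg_one_mul]; exact neg_smul (R := ℝ) (M := g →L[ℝ] ℝ) _ _
      rw [Finset.sum_congr rfl hre, Finset.sum_neg_distrib]
      simp only [pow_zero, one_smul, Nat.add_zero, iteratedDeriv_zero]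
      abel
  intro t
  have hμ : α 0 = fun s => ∑ i ∈ Finset.range k, ((-1 : ℝ) ^ i) •
      iteratedDeriv i (fun u => f i u - ∑ a, lam a u • gc a i u) s := by
    funext s
    have := key (k - 1) le_rfl s
    simp only [Nat.sub_self] at this
    rw [this]
    exact Finset.sum_congr (by rw [Nat.sub_add_cancel hk]) fun j _ => by rw [Nat.zero_add]
  rw [← hμ, h0 t, ← congrFun hμ t]
  abel
end

section
/- Let n ≥ 1 and let C, H be real n×n matrices. Consider on W = ℝⁿ × ℝⁿ × ℝⁿ (points written (q,v,p)) the alternating bilinear form ω((q,v,p),(q',v',p')) = ⟨q,p'⟩ − ⟨q',p⟩, and let S ⊆ W be the subspace S = {(q, v, Cq + Hv) : q, v ∈ ℝⁿ} (the tangent space to the graph of a Legendre-type transformation, with H the Hessian of the Lagrangian with respect to the highest-order velocities). Then the restriction of ω to S is nondegenerate (i.e., if (q,v,Cq+Hv) ∈ S satisfies ω((q,v,Cq+Hv), s') = 0 for all s' ∈ S, then q = 0 and v = 0) if and only if the matrix H is invertible. (This is the pointwise linear content of the statement that the first constraint submanifold W_c of the unified formalism, cut out by p_A^{k−1} = ∂L/∂q_kᴬ,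 is a symplectic submanifold precisely when the Hessian of L with respect to the highest-order velocities is nondegenerate.) -/
open Finset in
/-- The restriction of the canonical form `ω((q,v,p),(q',v',p')) = ⟨q,p'⟩ − ⟨q',p⟩`
to the tangent space `S = {(q, v, Cq + Hv)}` of the graph of the Legendre-type
transformation is nondegenerate iff the Hessian block `H` is invertible: the
pointwise content of the statement that the first constraint submanifold `W_c`
of the unified formalism is symplectic iff the Hessian of `L` with respect to
the highest-order velocities is nondegenerate. -/
theorem constraint_submanifold_symplectic_iff_hessian_invertible
    (n : ℕ) (hn : 1 ≤ n) (C H : Matrix (Fin n) (Fin n) ℝ) :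
    (∀ q v : Fin n → ℝ,
        (∀ q' v' : Fin n → ℝ,
          (∑ i, q i * (C.mulVec q' + H.mulVec v') i)
            - (∑ i, q' i * (C.mulVec q + H.mulVec v) i) = 0) →
        q = 0 ∧ v = 0) ↔ IsUnit H := by
  rw [Matrix.isUnit_iff_isUnit_det, isUnit_iff_ne_zero]
  constructor
  · intro hnd
    intro hdet
    obtain ⟨v, hv, hHv⟩ := Matrix.exists_mulVec_eq_zero_iff.2 hdet
    refine hv ((hnd 0 v ?_).2)
    intro q' v'
    simp [Matrix.mulVec_zero, hHv]
  · intro hdet q v hker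
    -- First show q = 0 using q' = 0, v' arbitrary
    have hq : Matrix.vecMul q H = 0 := by
      funext j
      have := hker 0 (Pi.single j 1)
      simp only [Matrix.mulVec_zero, Pi.zero_apply, zero_mul, Finset.sum_const_zero,
        sub_zero, zero_add] at this
      rw [Pi.zero_apply, ← this]
      simp [Matrix.vecMul, dotProduct, Matrix.mulVec_single, mul_comm]
    have hq0 : q = 0 := by
      by_contra hq0
      exact hdet (Matrix.exists_vecMul_eq_zero_iff.1 ⟨q, hq0, hq⟩)
    refine ⟨hq0, ?_⟩
    subst hq0
    have hHv : H.mulVec v = 0 := by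
      funext i
      have := hker (Pi.single i 1) 0
      simp only [Matrix.mulVec_zero, Pi.zero_apply, zero_mul, Finset.sum_const_zero,
        zero_sub, neg_eq_zero, zero_add] at this
      rw [Pi.zero_apply, ← this]
      rw [Finset.sum_eq_single i]
      · simp
      · intro b _ hb; simp [Pi.single_apply, hb]
      · intro h; exact absurd (Finset.mem_univ i) h
    by_contra hv0
    exact hdet (Matrix.exists_mulVec_eq_zero_iff.1 ⟨v, hv0, hHv⟩)
end
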